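/- arXiv:1602.07187 — 5 statements merged into one kernel-verified Lean document; each statement's English description precedes it below -/
import Mathlib

section
/- Let f : X → T be a continuous open map of topological spaces. Assume that T is irreducible and that for every point t ∈ T the fiber f⁻¹(t) is an irreducible (in particular nonempty) subspace of X. Then X is irreducible. -/
/-- Let `f : X → T` be a continuous open map of topological spaces. Assume that `T` is
irreducible and that for every point `t ∈ T` the fiber `f ⁻¹' {t}` is an irreducible
subspace of `X`. Then `X` is irreducible. -/
theorem irreducibleSpace_of_isOpenMap_of_irreducible_fibers
    {X T : Type*} [TopologicalSpace X] [TopologicalSpace T]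
    (f : X → T) (hcont : Continuous f) (hopen : IsOpenMap f)
    (hT : IrreducibleSpace T)
    (hfib : ∀ t : T, IsIrreducible (f ⁻¹' {t})) :
    IrreducibleSpace X := by
  have hne : Nonempty X := by
    obtain ⟨t⟩ := hT.toNonempty
    obtain ⟨x, _⟩ := (hfib t).nonempty
    exact ⟨x⟩
  have hpre : IsPreirreducible (Set.univ : Set X) := by
    intro U V hU hV ⟨u, _, hu⟩ ⟨v, _, hv⟩
    have h1 : (f '' U ∩ f '' V).Nonempty := by
      have := hT.isPreirreducible_univ (f '' U) (f '' V) (hopen U hU) (hopen V hV)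
        ⟨f u, Set.mem_univ _, Set.mem_image_of_mem f hu⟩
        ⟨f v, Set.mem_univ _, Set.mem_image_of_mem f hv⟩
      obtain ⟨t, _, ht⟩ := this
      exact ⟨t, ht⟩
    obtain ⟨t, ⟨x, hxU, hxt⟩, ⟨y, hyV, hyt⟩⟩ := h1
    obtain ⟨z, _, hz⟩ := (hfib t).2 U V hU hV ⟨x, hxt, hxU⟩ ⟨y, hyt, hyV⟩
    exact ⟨z, Set.mem_univ _, hz⟩
  exact { isPreirreducible_univ := hpre, toNonempty := hne }
end

section
/- Let f : X → T be a flat morphism of schemes which is locally of finite presentation. Assume that T is irreducible and that for every point t of T the fiber X_t = X ×_T Spec κ(t) is irreducible. Then X is irreducible. -/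
open AlgebraicGeometry CategoryTheory Limits

universe u

/-!
Flat morphisms are generalizing, so every point of `X` is a specialization of a point lying over
the generic point `η` of `T`. Hence the generic fiber `f ⁻¹' {η}` is dense in `X`, and being
irreducible, its closure `X` is irreducible.
-/

section Topology

variable {X Y : Type*} [TopologicalSpace X] [TopologicalSpace Y] {f : X → Y}

lemma GeneralizingMap.dense_preimage_singleton (hf : GeneralizingMap f) {η : Y}
    (hη : ∀ y, η ⤳ y) : Dense (f ⁻¹' {η}) := by
  intro x
  obtain ⟨x', hx'x, hx'η⟩ := hf (hη (f x))
  have hx' : x' ∈ f ⁻¹' {η} := hx'η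
  exact closure_mono (Set.singleton_subset_iff.2 hx') hx'x.mem_closure

lemma GeneralizingMap.irreducibleSpace (hf : GeneralizingMap f) {η : Y} (hη : ∀ y, η ⤳ y)
    (hfib : IsIrreducible (f ⁻¹' {η})) : IrreducibleSpace X := by
  rw [irreducibleSpace_def, Set.top_eq_univ, ← (hf.dense_preimage_singleton hη).closure_eq]
  exact hfib.closure

end Topology

lemma AlgebraicGeometry.Scheme.Hom.isIrreducible_preimage_singleton {X Y : Scheme.{u}}
    (f : X ⟶ Y) (y : Y) [IrreducibleSpace (f.fiber y)] : IsIrreducible (f ⁻¹' {y}) := by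
  rw [← f.range_fiberι, ← Set.image_univ]
  exact (IrreducibleSpace.isIrreducible_univ _).image _ (f.fiberι y).continuous.continuousOn

theorem irreducibleSpace_of_flat_of_locallyOfFinitePresentation_of_irreducible_fibers_general
    {X T : Scheme.{u}} (f : X ⟶ T)
    (hflat : ∀ x : X, RingHom.Flat (f.stalkMap x).hom)
    [IrreducibleSpace T]
    (hfib : ∀ t : T, IrreducibleSpace ↥(pullback f (T.fromSpecResidueField t))) :
    IrreducibleSpace X := by
  have : Flat f := Flat.of_stalkMap f hflat
  have : IrreducibleSpace (f.fiber (genericPoint T)) := hfib _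
  exact (Flat.generalizingMap f).irreducibleSpace (fun _ ↦ genericPoint_specializes _)
    (f.isIrreducible_preimage_singleton _)

/-- Let `f : X ⟶ T` be a flat morphism of schemes (all stalk maps are flat ring maps)
which is locally of finite presentation. Assume `T` is irreducible and every fiber
`X ×_T Spec κ(t)` is irreducible. Then `X` is irreducible. -/
theorem irreducibleSpace_of_flat_of_locallyOfFinitePresentation_of_irreducible_fibers
    {X T : Scheme.{u}} (f : X ⟶ T)
    (hflat : ∀ x : X, RingHom.Flat (f.stalkMap x).hom)
    [LocallyOfFinitePresentation f]
    [IrreducibleSpace T]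
    (hfib : ∀ t : T, IrreducibleSpace ↥(pullback f (T.fromSpecResidueField t))) :
    IrreducibleSpace X :=
  irreducibleSpace_of_flat_of_locallyOfFinitePresentation_of_irreducible_fibers_general f hflat hfib
end

section
/- Let f : X → T be a flat morphism of schemes, with X and T locally noetherian. Assume that T is reduced and that for every point t of T the fiber X_t = X ×_T Spec κ(t) is reduced. Then X is reduced. -/
/-!
Suppose first that `T` is reduced with finitely many irreducible components, with generic
points `η`. Then `g : ∐ Spec κ(η) ⟶ T` is quasi-compact and dominant, hence
scheme-theoretically dominant because `T` is reduced. Flat base change preserves this, so the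
sections of `𝒪_X` inject into those of `X ×_T ∐ Spec κ(η) = ∐ X_η`, a disjoint union of
reduced fibers. In general, `T` is covered by affine opens, which are noetherian and so have
finitely many irreducible components; the fibers of the restrictions of `f` over them are
fibers of `f`.
-/

open AlgebraicGeometry CategoryTheory Limits

universe u

namespace AlgebraicGeometry

variable {X Y S : Scheme.{u}}

/-- The residue field maps of an open immersion are isomorphisms, so the fiber of the base change
is the base change of the fiber along an isomorphism. -/
lemma isReduced_fiber_pullbackSnd_of_isOpenImmersion (f : X ⟶ S) (g : Y ⟶ S)
    [IsOpenImmersion g] (y : Y) (hf : IsReduced (f.fiber (g y))) :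
    IsReduced ((pullback.snd f g).fiber y) := by
  have H := isPullback_fiberToSpecResidueField_of_isPullback (.of_hasPullback f g) y
  exact ObjectProperty.prop_of_iso (IsReduced ·) (@asIso _ _ _ _ _ H.isIso_fst_of_isIso).symm hf

lemma isReduced_pullback_sigmaDesc_fromSpecResidueField {ι : Type u} (f : X ⟶ Y) (y : ι → Y)
    (hf : ∀ i, IsReduced (f.fiber (y i))) :
    IsReduced (pullback f (Sigma.desc fun i ↦ Y.fromSpecResidueField (y i))) :=
  @IsReduced.of_openCover _ ((sigmaOpenCover _).pullback₁ (pullback.snd _ _)) fun i ↦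
    ObjectProperty.prop_of_iso (IsReduced ·)
      (pullbackLeftPullbackSndIso _ _ _ ≪≫ pullback.congrHom rfl (Sigma.ι_desc _ i)).symm
      (hf i)

lemma isReduced_of_flat_of_isReduced_fiber_genericPoint (f : X ⟶ Y) [Flat f] [IsReduced Y]
    [Finite (irreducibleComponents Y)]
    (hf : ∀ Z : irreducibleComponents Y, IsReduced (f.fiber Z.2.1.genericPoint)) :
    IsReduced X := by
  let η (Z : irreducibleComponents Y) : Y := Z.2.1.genericPoint
  let E : Scheme := ∐ fun Z ↦ Spec (Y.residueField (η Z))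
  let g : E ⟶ Y := Sigma.desc fun Z ↦ Y.fromSpecResidueField (η Z)
  have : Finite E := (sigmaMk _).finite_iff.mp inferInstance
  have : QuasiCompact g := ⟨fun _ _ _ ↦ (Set.toFinite _).isCompact⟩
  have : IsDominant g := by
    rw [isDominant_iff, denseRange_iff_closure_range, Set.eq_univ_iff_forall]
    intro y
    let Z : irreducibleComponents Y := ⟨_, irreducibleComponent_mem_irreducibleComponents y⟩
    have hηy : η Z ⤳ y :=
      (Z.2.1.isGenericPoint_genericPoint isClosed_irreducibleComponent).specializes
        mem_irreducibleComponent
    have hη : η Z ∈ Set.range g := by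
      have hZ : Sigma.ι _ Z ≫ g = Y.fromSpecResidueField (η Z) := Sigma.ι_desc _ Z
      obtain ⟨s⟩ : Nonempty (Spec (Y.residueField (η Z))) := inferInstance
      exact ⟨Sigma.ι (fun Z ↦ Spec (Y.residueField (η Z))) Z s, by
        rw [← Scheme.Hom.comp_apply, hZ, Scheme.fromSpecResidueField_apply]⟩
    exact hηy.mem_closed isClosed_closure (subset_closure hη)
  have : IsSchemeTheoreticallyDominant g := .of_isDominant g
  have : IsReduced (pullback f g) := isReduced_pullback_sigmaDesc_fromSpecResidueField f η hf
  exact IsSchemeTheoreticallyDominant.isReduced (pullback.fst f g)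

end AlgebraicGeometry

theorem isReduced_of_flat_of_reduced_fibers_general
    {X T : Scheme.{u}} (f : X ⟶ T)
    [IsLocallyNoetherian T]
    (hflat : ∀ x : X, RingHom.Flat (f.stalkMap x).hom)
    [IsReduced T]
    (hfib : ∀ t : T, IsReduced (pullback f (T.fromSpecResidueField t))) :
    IsReduced X := by
  have : Flat f := Flat.of_stalkMap f hflat
  refine @IsReduced.of_openCover _ (T.affineCover.pullback₁ f) fun (i : T.affineCover.I₀) ↦ ?_
  have : Finite (irreducibleComponents (T.affineCover.X i)) := by
    have : IsNoetherian (T.affineCover.X i) := ⟨⟩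
    exact TopologicalSpace.NoetherianSpace.finite_irreducibleComponents
  show IsReduced (pullback f (T.affineCover.f i))
  exact isReduced_of_flat_of_isReduced_fiber_genericPoint (pullback.snd f (T.affineCover.f i))
    fun _ ↦ isReduced_fiber_pullbackSnd_of_isOpenImmersion f _ _ (hfib _)

/-- Let `f : X ⟶ T` be a flat morphism of schemes (all stalk maps are flat ring maps),
with `X` and `T` locally noetherian. Assume `T` is reduced and every fiber
`X ×_T Spec κ(t)` is reduced. Then `X` is reduced. -/
theorem isReduced_of_flat_of_reduced_fibers
    {X T : Scheme.{u}} (f : X ⟶ T)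
    [IsLocallyNoetherian X] [IsLocallyNoetherian T]
    (hflat : ∀ x : X, RingHom.Flat (f.stalkMap x).hom)
    [IsReduced T]
    (hfib : ∀ t : T, IsReduced (pullback f (T.fromSpecResidueField t))) :
    IsReduced X :=
  isReduced_of_flat_of_reduced_fibers_general f hflat hfib
end

section
/- Let Y be a locally noetherian scheme, let f : X → Y be a flat morphism which is locally of finite type, and let V be a schematically dense open subscheme of Y. Then f⁻¹(V) is a schematically dense open subscheme of X. -/
open AlgebraicGeometry CategoryTheory

universe u

/-- A morphism of schemes `f : X ⟶ Y` is schematically dominant if the canonical map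
`O_Y → f_* O_X` is injective, i.e. `Γ(Y, U) → Γ(X, f ⁻¹ᵁ U)` is injective for every
open `U ⊆ Y`. -/
def SchematicallyDominant {X Y : Scheme.{u}} (f : X ⟶ Y) : Prop :=
  ∀ U : Y.Opens, Function.Injective (f.app U)

/-- An open subscheme `U` of a scheme `X` is schematically dense if the open
immersion `U ⟶ X` is schematically dominant. -/
def SchematicallyDense {X : Scheme.{u}} (U : X.Opens) : Prop :=
  SchematicallyDominant U.ι

/-! For a quasi-compact morphism, schematic dominance says that its kernel ideal sheaf vanishes,
and this is stable under flat base change. On a locally noetherian scheme every open immersion is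
quasi-compact, and `f ⁻¹ᵁ V ⟶ X` is the base change of `V ⟶ Y` along `f`. -/

lemma schematicallyDominant_iff_isSchemeTheoreticallyDominant {X Y : Scheme.{u}} (f : X ⟶ Y)
    [QuasiCompact f] : SchematicallyDominant f ↔ IsSchemeTheoreticallyDominant f := by
  refine ⟨fun hf ↦ ⟨Scheme.IdealSheafData.ext (funext fun U ↦ ?_)⟩, fun _ ↦ f.app_injective⟩
  rw [f.ker_apply U]
  exact (RingHom.injective_iff_ker_eq_bot _).mp (hf U)

lemma SchematicallyDense.preimage_of_flat {X Y : Scheme.{u}} (f : X ⟶ Y) [Flat f]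
    {V : Y.Opens} [QuasiCompact V.ι] (hV : SchematicallyDense V) :
    SchematicallyDense (f ⁻¹ᵁ V) := by
  have hpb := isPullback_morphismRestrict f V
  have : QuasiCompact (f ⁻¹ᵁ V).ι := MorphismProperty.of_isPullback hpb ‹_›
  rw [SchematicallyDense, schematicallyDominant_iff_isSchemeTheoreticallyDominant] at hV ⊢
  exact .of_isPullback hpb

theorem schematicallyDense_preimage_of_flat_of_locallyOfFiniteType_general
    {X Y : Scheme.{u}} (f : X ⟶ Y)
    [IsLocallyNoetherian Y]
    (hflat : ∀ x : X, RingHom.Flat (f.stalkMap x).hom)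
    (V : Y.Opens) (hV : SchematicallyDense V) :
    SchematicallyDense (f ⁻¹ᵁ V) := by
  have : Flat f := .of_stalkMap f hflat
  exact hV.preimage_of_flat f

/-- Let `Y` be a locally noetherian scheme, `f : X ⟶ Y` a flat morphism (all stalk
maps are flat ring maps) which is locally of finite type, and `V` a schematically
dense open subscheme of `Y`. Then `f ⁻¹ᵁ V` is schematically dense in `X`. -/
theorem schematicallyDense_preimage_of_flat_of_locallyOfFiniteType
    {X Y : Scheme.{u}} (f : X ⟶ Y)
    [IsLocallyNoetherian Y]
    (hflat : ∀ x : X, RingHom.Flat (f.stalkMap x).hom)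
    [LocallyOfFiniteType f]
    (V : Y.Opens) (hV : SchematicallyDense V) :
    SchematicallyDense (f ⁻¹ᵁ V) :=
  schematicallyDense_preimage_of_flat_of_locallyOfFiniteType_general f hflat V hV
end

section
/- Let K be a finite field of characteristic p with q elements, and let r be a positive integer with p^r > q. Then there is no injective group homomorphism from (ℤ/pℤ)^r into PGL₂(K), the quotient of GL₂(K) by its center. -/
/-!
An injective homomorphism makes `p ^ r` divide `|PGL₂(K)|`, hence also `|GL₂(K)| = (q² - 1) q (q - 1)`.
Since `q` is a power of `p`, both `q² - 1` and `q - 1` are prime to `p`, so `p ^ r ∣ q`, which is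
impossible when `q < p ^ r`.
-/

open Matrix

theorem Nat.coprime_pow_sub_one_of_dvd {p m : ℕ} (hpm : p ∣ m) (hm : 0 < m) (k : ℕ) :
    Nat.Coprime (p ^ k) (m - 1) :=
  (((Nat.coprime_self_sub_right hm).mpr (Nat.coprime_one_right m)).coprime_dvd_left hpm).pow_left k

theorem Matrix.card_GL_two_field (K : Type*) [Field K] [Fintype K] :
    Nat.card (GL (Fin 2) K) =
      (Fintype.card K ^ 2 - 1) * (Fintype.card K * (Fintype.card K - 1)) := by
  rw [card_GL_field, Fin.prod_univ_two, Fin.val_zero, Fin.val_one, pow_zero, pow_one,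
    Nat.mul_sub (Fintype.card K), mul_one, sq]

theorem pow_dvd_card_of_pow_dvd_card_GL_two {K : Type*} [Field K] [Fintype K] {p : ℕ}
    [CharP K p] {r : ℕ} (h : p ^ r ∣ Nat.card (GL (Fin 2) K)) :
    p ^ r ∣ Fintype.card K := by
  set q := Fintype.card K
  have hpq : p ∣ q := by
    obtain ⟨n, -, hcard⟩ := FiniteField.card K p
    exact (show q = _ from hcard) ▸ dvd_pow_self p n.pos.ne'
  have hq : 0 < q := Fintype.card_pos
  rw [card_GL_two_field] at h
  have h' : p ^ r ∣ q * (q - 1) :=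
    (Nat.coprime_pow_sub_one_of_dvd (hpq.trans (dvd_pow_self q two_ne_zero))
      (pow_pos hq 2) r).dvd_of_dvd_mul_left h
  exact (Nat.coprime_pow_sub_one_of_dvd hpq hq r).dvd_of_dvd_mul_right h'

theorem no_injective_hom_elementary_abelian_to_PGL2_general
    {K : Type*} [Field K] [Fintype K] {p : ℕ} [CharP K p]
    (r : ℕ) (hq : Fintype.card K < p ^ r) :
    ¬ ∃ φ : Multiplicative (Fin r → ZMod p) →*
        (GL (Fin 2) K ⧸ Subgroup.center (GL (Fin 2) K)),
      Function.Injective φ := by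
  rintro ⟨φ, hφ⟩
  have hdvd : p ^ r ∣ Nat.card (GL (Fin 2) K) :=
    calc p ^ r = Nat.card (Multiplicative (Fin r → ZMod p)) := by
          rw [Nat.card_congr Multiplicative.toAdd, Nat.card_fun, Nat.card_zmod, Nat.card_fin]
      _ ∣ Nat.card (GL (Fin 2) K ⧸ Subgroup.center (GL (Fin 2) K)) :=
          Subgroup.card_dvd_of_injective φ hφ
      _ ∣ Nat.card (GL (Fin 2) K) := Subgroup.card_quotient_dvd_card _
  exact hq.not_ge (Nat.le_of_dvd Fintype.card_pos (pow_dvd_card_of_pow_dvd_card_GL_two hdvd))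

/-- Let `K` be a finite field of characteristic `p` with `q` elements, and let `r` be a
positive integer with `p ^ r > q`. Then there is no injective group homomorphism from
`(ℤ/pℤ)^r` into `PGL₂(K) = GL₂(K) / center`. -/
theorem no_injective_hom_elementary_abelian_to_PGL2
    {K : Type*} [Field K] [Fintype K] {p : ℕ} [Fact p.Prime] [CharP K p]
    (r : ℕ) (hr : 0 < r) (hq : Fintype.card K < p ^ r) :
    ¬ ∃ φ : Multiplicative (Fin r → ZMod p) →*
        (GL (Fin 2) K ⧸ Subgroup.center (GL (Fin 2) K)),
      Function.Injective φ :=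
  no_injective_hom_elementary_abelian_to_PGL2_general r hq
end
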